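/- For any N-database K-message private information retrieval code and any k ∈ {1,...,K-1}, the quantity T^k := H(A_1^[k],...,A_N^[k] | W_1,...,W_k, F) satisfies T^k ≥ (L log₂|X|)/N + T^{k+1}/N. -/

import Mathlib

open scoped Classical
open Real

noncomputable section

/-- A probability mass function on a finite sample space. -/
structure FinProb (Ω : Type) [Fintype Ω] where
  p : Ω → ℝ
  nonneg : ∀ ω, 0 ≤ p ω
  sum_one : ∑ ω, p ω = 1

namespace FinProb

variable {Ω : Type} [Fintype Ω]

/-- The probability of an event. -/
def prob (P : FinProb Ω) (E : Ω → Prop) : ℝ :=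
  ∑ ω, if E ω then P.p ω else 0

/-- The Shannon entropy (in bits) of a random variable `Z` (with the usual
convention `0 · log 0 = 0`, automatic since `Real.logb 2 0 = 0`). -/
def entH {σ : Type} (P : FinProb Ω) (Z : Ω → σ) : ℝ :=
  ∑ z ∈ Finset.univ.image Z,
    -(P.prob fun ω => Z ω = z) * Real.logb 2 (P.prob fun ω => Z ω = z)

/-- The conditional Shannon entropy (in bits) `H(Z | C)`. -/
def condH {σ τ : Type} (P : FinProb Ω) (Z : Ω → σ) (C : Ω → τ) : ℝ :=
  P.entH (fun ω => (Z ω, C ω)) - P.entH C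

end FinProb

/-- The uniform distribution on a finite nonempty set. -/
def uniformProb (Ω : Type) [Fintype Ω] [Nonempty Ω] : FinProb Ω where
  p _ := (Fintype.card Ω : ℝ)⁻¹
  nonneg _ := by positivity
  sum_one := by
    rw [Finset.sum_const, Finset.card_univ, nsmul_eq_mul,
      mul_inv_cancel₀ (by exact_mod_cast Fintype.card_ne_zero)]

/-- The sample space of a PIR code: a pair of (message realizations, random key).
The `K` messages each consist of `L` symbols from the alphabet `X`. -/
abbrev PIRSamp (K L : ℕ) (X F : Type) : Type := (Fin K → Fin L → X) × F

/-- The underlying probability distribution of a PIR code: the `K` messages are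
mutually independent, each uniform on `X^L`, and the random key is uniform on `F`
and independent of the messages; equivalently, `(W_{1:K}, F)` is uniform. -/
def pirP (K L : ℕ) (X F : Type) [Fintype X] [Nonempty X] [Fintype F] [Nonempty F] :
    FinProb (PIRSamp K L X F) := uniformProb _

/-- An `N`-database `K`-message private information retrieval code with message length `L`,
message alphabet `X`, answer alphabet `Y`, random-key set `F`, query sets `Q n` and
storage sets `S n`.  The stored content of database `n` is `store n` applied to the messages;
the query to database `n` is `query n k F`; the answer is a string of `len n q` symbols of `Y`
(a deterministic function of the query and the stored content); `correct` states that the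
desired message is a deterministic function of the answers and the random key, and `privacy`
states that the query distribution does not depend on the desired message index. -/
structure PIRCode (N K L : ℕ) (X Y F : Type) (Q S : Fin N → Type)
    [Fintype X] [Nonempty X] [Fintype Y] [Fintype F] [Nonempty F]
    [∀ n, Fintype (Q n)] [∀ n, Fintype (S n)] : Type where
  hN : 0 < N
  hK : 0 < K
  hL : 0 < L
  hX : 2 ≤ Fintype.card X
  store : (n : Fin N) → (Fin K → Fin L → X) → S n
  query : (n : Fin N) → Fin K → F → Q n
  len : (n : Fin N) → Q n → ℕ
  answer : (n : Fin N) → (q : Q n) → S n → (Fin (len n q) → Y)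
  correct : ∀ (k : Fin K) (ω ω' : PIRSamp K L X F), ω.2 = ω'.2 →
    (∀ n : Fin N, List.ofFn (answer n (query n k ω.2) (store n ω.1)) =
      List.ofFn (answer n (query n k ω'.2) (store n ω'.1))) →
    ω.1 k = ω'.1 k
  privacy : ∀ (n : Fin N) (k k' : Fin K) (q : Q n),
    (pirP K L X F).prob (fun ω => query n k ω.2 = q) =
      (pirP K L X F).prob (fun ω => query n k' ω.2 = q)

namespace PIRCode

variable {N K L : ℕ} {X Y F : Type} {Q S : Fin N → Type}
  [Fintype X] [Nonempty X] [Fintype Y] [Fintype F] [Nonempty F]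
  [∀ n, Fintype (Q n)] [∀ n, Fintype (S n)]

/-- Message `k` (0-indexed) as a random variable. -/
def Wrv (_c : PIRCode N K L X Y F Q S) (k : Fin K) : PIRSamp K L X F → (Fin L → X) :=
  fun ω => ω.1 k

/-- The random key as a random variable. -/
def Frv (_c : PIRCode N K L X Y F Q S) : PIRSamp K L X F → F := fun ω => ω.2

/-- The stored content `S_n` as a random variable. -/
def Srv (c : PIRCode N K L X Y F Q S) (n : Fin N) : PIRSamp K L X F → S n :=
  fun ω => c.store n ω.1

/-- The query `Q_n^{[k]}` as a random variable. -/
def Qrv (c : PIRCode N K L X Y F Q S) (n : Fin N) (k : Fin K) : PIRSamp K L X F → Q n :=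
  fun ω => c.query n k ω.2

/-- The answer string `A_n^{[k]}` of database `n` when retrieving message `k`. -/
def Arv (c : PIRCode N K L X Y F Q S) (n : Fin N) (k : Fin K) : PIRSamp K L X F → List Y :=
  fun ω => List.ofFn (c.answer n (c.query n k ω.2) (c.store n ω.1))

/-- The answer string `A_n^{(q)}` of database `n` to the fixed query `q`. -/
def AnsFix (c : PIRCode N K L X Y F Q S) (n : Fin N) (q : Q n) : PIRSamp K L X F → List Y :=
  fun ω => List.ofFn (c.answer n q (c.store n ω.1))

/-- The operational storage cost `α_n = log₂|𝒮_n| / (L log₂|X|)` of database `n`. -/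
def alphaN (_c : PIRCode N K L X Y F Q S) (n : Fin N) : ℝ :=
  Real.logb 2 (Fintype.card (S n)) / (L * Real.logb 2 (Fintype.card X))

/-- The average per-node storage cost `α`. -/
def alphaAvg (c : PIRCode N K L X Y F Q S) : ℝ := (∑ n, c.alphaN n) / N

/-- The expected answer length `E[ℓ_n(Q_n^{[k]})]`. -/
def expLen (c : PIRCode N K L X Y F Q S) (n : Fin N) (k : Fin K) : ℝ :=
  ∑ ω : PIRSamp K L X F, (pirP K L X F).p ω * (c.len n (c.query n k ω.2))

/-- The operational download cost of database `n` for message index `k`: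
`E[ℓ_n(Q_n^{[k]})]·log₂|Y| / (L log₂|X|)`. -/
def betaNK (c : PIRCode N K L X Y F Q S) (n : Fin N) (k : Fin K) : ℝ :=
  c.expLen n k * Real.logb 2 (Fintype.card Y) / (L * Real.logb 2 (Fintype.card X))

/-- The operational download cost `β_n` of database `n` (independent of the retrieved
message index by privacy, hence evaluated at the first message). -/
def betaN (c : PIRCode N K L X Y F Q S) (n : Fin N) : ℝ := c.betaNK n ⟨0, c.hK⟩

/-- The average per-node download cost `β`. -/
def betaAvg (c : PIRCode N K L X Y F Q S) : ℝ := (∑ n, c.betaN n) / N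

/-- The informational storage cost `α'_n = H(S_n) / (L log₂|X|)`. -/
def alphaInfoN (c : PIRCode N K L X Y F Q S) (n : Fin N) : ℝ :=
  (pirP K L X F).entH (c.Srv n) / (L * Real.logb 2 (Fintype.card X))

/-- The informational download cost `β'_n = H(A_n^{[k]} | F) / (L log₂|X|)`. -/
def betaInfoNK (c : PIRCode N K L X Y F Q S) (n : Fin N) (k : Fin K) : ℝ :=
  (pirP K L X F).condH (c.Arv n k) c.Frv / (L * Real.logb 2 (Fintype.card X))

/-- The first `m` messages `W_{1:m}` as a single random variable (messages with
0-indexed position `≥ m` are blanked out by `none`). -/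
def WleRv (_c : PIRCode N K L X Y F Q S) (m : ℕ) :
    PIRSamp K L X F → (Fin K → Option (Fin L → X)) :=
  fun ω i => if (i : ℕ) < m then some (ω.1 i) else none

/-- All answers `A_{1:N}^{[k]}` as a single random variable. -/
def AallRv (c : PIRCode N K L X Y F Q S) (k : Fin K) : PIRSamp K L X F → (Fin N → List Y) :=
  fun ω n => c.Arv n k ω

/-- The answers `A_{1:n-1,n+1:N}^{[k]}` of all databases except database `n`. -/
def AexcRv (c : PIRCode N K L X Y F Q S) (n : Fin N) (k : Fin K) :
    PIRSamp K L X F → (Fin N → Option (List Y)) :=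
  fun ω n' => if n' = n then none else some (c.Arv n' k ω)

/-- The stored contents `S_{1:n-1,n+1:N}` of all databases except database `n`. -/
def SexcRv (c : PIRCode N K L X Y F Q S) (n : Fin N) :
    PIRSamp K L X F → ((n' : Fin N) → Option (S n')) :=
  fun ω n' => if n' = n then none else some (c.store n' ω.1)

/-- `T^k = H(A_{1:N}^{[k]} | W_{1:k}, F)`; here `k : Fin K` is the 0-indexed message
index, corresponding to the paper's message index `k+1`. -/
def T (c : PIRCode N K L X Y F Q S) (k : Fin K) : ℝ :=
  (pirP K L X F).condH (c.AallRv k) (fun ω => (c.WleRv ((k : ℕ) + 1) ω, ω.2))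

/-- `V_n^k = H(A_{1:n-1,n+1:N}^{[k]}, S_n | W_{1:k}, F)` (0-indexed `k`, as in `T`). -/
def Vnk (c : PIRCode N K L X Y F Q S) (n : Fin N) (k : Fin K) : ℝ :=
  (pirP K L X F).condH (fun ω => (c.AexcRv n k ω, c.Srv n ω))
    (fun ω => (c.WleRv ((k : ℕ) + 1) ω, ω.2))

/-- `V^k = (1/N) Σ_n V_n^k`. -/
def Vavg (c : PIRCode N K L X Y F Q S) (k : Fin K) : ℝ := (∑ n, c.Vnk n k) / N

end PIRCode

section EntropyToolkit

open Finset

namespace FinProb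

variable {Ω : Type} [Fintype Ω] (P : FinProb Ω)

lemma prob_nonneg (E : Ω → Prop) : 0 ≤ P.prob E := by
  refine Finset.sum_nonneg fun ω _ => ?_
  by_cases h : E ω <;> simp [h, P.nonneg ω]

lemma prob_mono {E E' : Ω → Prop} (h : ∀ ω, E ω → E' ω) : P.prob E ≤ P.prob E' := by
  refine Finset.sum_le_sum fun ω _ => ?_
  by_cases hE : E ω
  · simp only [hE, if_true, h ω hE, le_refl]
  · by_cases hE' : E' ω <;> simp [hE, hE', P.nonneg ω]

lemma prob_congr {E E' : Ω → Prop} (h : ∀ ω, E ω ↔ E' ω) : P.prob E = P.prob E' :=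
  Finset.sum_congr rfl fun ω _ => by rw [if_congr (h ω) rfl rfl]

lemma single_le_prob {E : Ω → Prop} (ω : Ω) (hω : E ω) : P.p ω ≤ P.prob E := by
  have := Finset.single_le_sum (f := fun ω' => if E ω' then P.p ω' else 0)
    (fun i _ => by by_cases h : E i <;> simp [h, P.nonneg i]) (Finset.mem_univ ω)
  simpa [FinProb.prob, hω] using this

lemma sum_image_prob_mul {σ : Type} (Z : Ω → σ) (g : σ → ℝ) :
    ∑ z ∈ Finset.univ.image Z, P.prob (fun ω => Z ω = z) * g z = ∑ ω, P.p ω * g (Z ω) := by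
  unfold prob
  simp_rw [Finset.sum_mul, ite_mul, zero_mul]
  rw [Finset.sum_comm]
  refine Finset.sum_congr rfl fun ω _ => ?_
  rw [Finset.sum_ite_eq (Finset.univ.image Z) (Z ω) (fun z => P.p ω * g z)]
  simp [Finset.mem_image_of_mem]

lemma entH_eq {σ : Type} (Z : Ω → σ) :
    P.entH Z = ∑ ω, P.p ω * -Real.logb 2 (P.prob fun ω' => Z ω' = Z ω) := by
  rw [← P.sum_image_prob_mul Z (fun z => -Real.logb 2 (P.prob fun ω => Z ω = z))]
  exact Finset.sum_congr rfl fun z _ => by ring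

lemma entH_congr {σ σ' : Type} {Z : Ω → σ} {Z' : Ω → σ'}
    (h : ∀ ω ω', Z ω = Z ω' ↔ Z' ω = Z' ω') : P.entH Z = P.entH Z' := by
  rw [P.entH_eq Z, P.entH_eq Z']
  exact Finset.sum_congr rfl fun ω _ => by rw [P.prob_congr (fun ω' => h ω' ω)]

lemma entH_mono {σ σ' : Type} {Z : Ω → σ} {Z' : Ω → σ'}
    (h : ∀ ω ω', Z ω = Z ω' → Z' ω = Z' ω') : P.entH Z' ≤ P.entH Z := by
  rw [P.entH_eq Z, P.entH_eq Z']
  refine Finset.sum_le_sum fun ω _ => ?_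
  rcases (P.nonneg ω).eq_or_lt with hp | hp
  · rw [← hp]; simp
  · have h1 : P.p ω ≤ P.prob fun ω' => Z ω' = Z ω := P.single_le_prob ω rfl
    have h2 : P.prob (fun ω' => Z ω' = Z ω) ≤ P.prob fun ω' => Z' ω' = Z' ω :=
      P.prob_mono fun ω' hz => h ω' ω hz
    have := Real.logb_le_logb_of_le (by norm_num : (1:ℝ) < 2) (lt_of_lt_of_le hp h1) h2
    nlinarith

lemma condH_mono_left {σ σ' τ : Type} {Z : Ω → σ} {Z' : Ω → σ'} (C : Ω → τ)
    (h : ∀ ω ω', Z ω = Z ω' → Z' ω = Z' ω') : P.condH Z' C ≤ P.condH Z C := by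
  have := P.entH_mono (Z := fun ω => (Z ω, C ω)) (Z' := fun ω => (Z' ω, C ω))
    (fun ω ω' hh => by
      simp only [Prod.mk.injEq] at hh ⊢
      exact ⟨h ω ω' hh.1, hh.2⟩)
  unfold condH
  linarith

lemma condH_congr_left {σ σ' τ : Type} {Z : Ω → σ} {Z'' : Ω → σ'} {C : Ω → τ}
    (h : ∀ ω ω', (Z ω = Z ω' ∧ C ω = C ω') ↔ (Z'' ω = Z'' ω' ∧ C ω = C ω')) :
    P.condH Z C = P.condH Z'' C := by
  unfold condH
  rw [P.entH_congr (Z := fun ω => (Z ω, C ω)) (Z' := fun ω => (Z'' ω, C ω))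
    (fun ω ω' => by simp only [Prod.mk.injEq]; exact h ω ω')]

lemma condH_congr_right {σ τ τ' : Type} {Z : Ω → σ} {C : Ω → τ} {C' : Ω → τ'}
    (h : ∀ ω ω', C ω = C ω' ↔ C' ω = C' ω') : P.condH Z C = P.condH Z C' := by
  unfold condH
  rw [P.entH_congr h, P.entH_congr (Z := fun ω => (Z ω, C ω)) (Z' := fun ω => (Z ω, C' ω))
    (fun ω ω' => by simp only [Prod.mk.injEq]; rw [h ω ω'])]

lemma condH_chain {σ σ' τ : Type} (Z : Ω → σ) (Z' : Ω → σ') (C : Ω → τ) :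
    P.condH (fun ω => (Z ω, Z' ω)) C
      = P.condH Z' C + P.condH Z (fun ω => (Z' ω, C ω)) := by
  unfold condH
  rw [P.entH_congr (Z := fun ω => ((Z ω, Z' ω), C ω)) (Z' := fun ω => (Z ω, (Z' ω, C ω)))
    (fun ω ω' => by simp only [Prod.mk.injEq]; tauto)]
  ring

end FinProb

end EntropyToolkit

section Submod

open Finset

namespace FinProb

variable {Ω : Type} [Fintype Ω] (P : FinProb Ω)

lemma sum_prob_image {σ : Type} (Z : Ω → σ) :
    ∑ z ∈ Finset.univ.image Z, P.prob (fun ω => Z ω = z) = 1 := by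
  have := P.sum_image_prob_mul Z (fun _ => (1:ℝ))
  simpa [P.sum_one] using this

lemma sum_pair_prob {σ τ : Type} (Z : Ω → σ) (C : Ω → τ) (c : τ) :
    ∑ z ∈ Finset.univ.image Z, P.prob (fun ω => (Z ω, C ω) = (z, c))
      = P.prob (fun ω => C ω = c) := by
  unfold prob
  rw [Finset.sum_comm]
  refine Finset.sum_congr rfl fun ω _ => ?_
  by_cases hc : C ω = c
  · simp only [Prod.mk.injEq, hc, and_true]
    rw [Finset.sum_ite_eq (Finset.univ.image Z) (Z ω) (fun _ => P.p ω)]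
    simp [Finset.mem_image_of_mem, hc]
  · simp [Prod.mk.injEq, hc]

lemma concaveOn_logb2 : ConcaveOn ℝ (Set.Ioi 0) (Real.logb 2) := by
  have h := (strictConcaveOn_log_Ioi.concaveOn).smul
    (c := (Real.log 2)⁻¹) (by positivity)
  have e : Real.logb 2 = fun x => (Real.log 2)⁻¹ • Real.log x := by
    funext x
    simp [Real.logb, div_eq_inv_mul]
  rw [e]; exact h

lemma entH_submodular {σ σ' τ : Type} (Z : Ω → σ) (Z' : Ω → σ') (C : Ω → τ) :
    P.entH (fun ω => (Z ω, Z' ω, C ω)) + P.entH C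
      ≤ P.entH (fun ω => (Z ω, C ω)) + P.entH (fun ω => (Z' ω, C ω)) := by
  classical
  set a : Ω → ℝ := fun ω => P.prob (fun ω' => (Z ω', C ω') = (Z ω, C ω)) with ha
  set b : Ω → ℝ := fun ω => P.prob (fun ω' => (Z' ω', C ω') = (Z' ω, C ω)) with hb
  set d : Ω → ℝ := fun ω => P.prob (fun ω' => (Z ω', Z' ω', C ω') = (Z ω, Z' ω, C ω)) with hd
  set e : Ω → ℝ := fun ω => P.prob (fun ω' => C ω' = C ω) with he
  have hpa : ∀ ω, P.p ω ≤ a ω := fun ω => P.single_le_prob ω rfl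
  have hpb : ∀ ω, P.p ω ≤ b ω := fun ω => P.single_le_prob ω rfl
  have hpd : ∀ ω, P.p ω ≤ d ω := fun ω => P.single_le_prob ω rfl
  have hpe : ∀ ω, P.p ω ≤ e ω := fun ω => P.single_le_prob ω rfl
  set r : Ω → ℝ := fun ω => if P.p ω = 0 then 1 else a ω * b ω / (d ω * e ω) with hr
  have hrpos : ∀ ω, 0 < r ω := by
    intro ω
    rw [hr]
    rcases (P.nonneg ω).eq_or_lt with hp | hp
    · simp [← hp]
    · have := hp.ne'
      simp only [this, if_false]
      have h1 := lt_of_lt_of_le hp (hpa ω)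
      have h2 := lt_of_lt_of_le hp (hpb ω)
      have h3 := lt_of_lt_of_le hp (hpd ω)
      have h4 := lt_of_lt_of_le hp (hpe ω)
      positivity
  -- the grouped sum is at most 1
  have hsum_le : ∑ ω, P.p ω * r ω ≤ 1 := by
    set T : Ω → σ × σ' × τ := fun ω => (Z ω, Z' ω, C ω) with hT
    set A : σ × σ' × τ → ℝ := fun t => P.prob (fun ω' => (Z ω', C ω') = (t.1, t.2.2)) with hA
    set B : σ × σ' × τ → ℝ := fun t => P.prob (fun ω' => (Z' ω', C ω') = (t.2.1, t.2.2)) with hB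
    set Ee : σ × σ' × τ → ℝ := fun t => P.prob (fun ω' => C ω' = t.2.2) with hEe
    set Dd : σ × σ' × τ → ℝ := fun t => P.prob (fun ω' => (Z ω', Z' ω', C ω') = t) with hDd
    set g : σ × σ' × τ → ℝ := fun t => A t * B t / (Dd t * Ee t) with hg
    have step1 : ∑ ω, P.p ω * r ω = ∑ ω, P.p ω * g (T ω) := by
      refine Finset.sum_congr rfl fun ω _ => ?_
      rcases (P.nonneg ω).eq_or_lt with hp | hp
      · rw [← hp]; ring
      · have hrg : r ω = a ω * b ω / (d ω * e ω) := by
          simp only [hr]; rw [if_neg hp.ne']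
        rw [hrg]
    have step3 : ∀ t : σ × σ' × τ, P.prob (fun ω => T ω = t) * g t
        ≤ A t * B t / Ee t := by
      intro t
      have hDt : P.prob (fun ω => T ω = t) = Dd t := rfl
      rcases (P.prob_nonneg (fun ω => T ω = t)).eq_or_lt with hz | hz
      · rw [← hz, zero_mul]
        have h1 : 0 ≤ A t := P.prob_nonneg _
        have h2 : 0 ≤ B t := P.prob_nonneg _
        have h3 : 0 ≤ Ee t := P.prob_nonneg _
        positivity
      · have hDpos : 0 < Dd t := by rw [← hDt]; exact hz
        have hEpos : 0 < Ee t := by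
          refine lt_of_lt_of_le hDpos (P.prob_mono fun ω' hω' => ?_)
          rw [show t = (t.1, t.2.1, t.2.2) from rfl] at hω'
          simp only [Prod.mk.injEq] at hω'
          exact hω'.2.2
        rw [hDt, hg]
        have hcalc : Dd t * (A t * B t / (Dd t * Ee t)) = A t * B t / Ee t := by
          field_simp
        exact le_of_eq hcalc
    have step4 : ∀ t : σ × σ' × τ, 0 ≤ A t * B t / Ee t := by
      intro t
      have h1 : 0 ≤ A t := P.prob_nonneg _
      have h2 : 0 ≤ B t := P.prob_nonneg _
      have h3 : 0 ≤ Ee t := P.prob_nonneg _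
      positivity
    have step5 : ∑ t ∈ (Finset.univ.image Z) ×ˢ ((Finset.univ.image Z') ×ˢ (Finset.univ.image C)),
        A t * B t / Ee t ≤ 1 := by
      rw [Finset.sum_product]
      rw [Finset.sum_comm]
      calc ∑ y ∈ (Finset.univ.image Z') ×ˢ (Finset.univ.image C), ∑ z ∈ Finset.univ.image Z,
              A (z, y) * B (z, y) / Ee (z, y)
          = ∑ z' ∈ Finset.univ.image Z', ∑ cc ∈ Finset.univ.image C, ∑ z ∈ Finset.univ.image Z,
              A (z, z', cc) * B (z, z', cc) / Ee (z, z', cc) := by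
            rw [Finset.sum_product]
        _ = ∑ cc ∈ Finset.univ.image C, ∑ z' ∈ Finset.univ.image Z', ∑ z ∈ Finset.univ.image Z,
              A (z, z', cc) * B (z, z', cc) / Ee (z, z', cc) := Finset.sum_comm
        _ ≤ ∑ cc ∈ Finset.univ.image C, P.prob (fun ω => C ω = cc) := by
            refine Finset.sum_le_sum fun cc _ => ?_
            have hre : ∀ z' z, A (z, z', cc) * B (z, z', cc) / Ee (z, z', cc)
                = P.prob (fun ω => (Z ω, C ω) = (z, cc))
                    * P.prob (fun ω => (Z' ω, C ω) = (z', cc))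
                    / P.prob (fun ω => C ω = cc) := fun _ _ => rfl
            simp_rw [hre]
            rcases (P.prob_nonneg (fun ω => C ω = cc)).eq_or_lt with hz | hz
            · simp [← hz]
            · have hfac : ∀ z', ∑ z ∈ Finset.univ.image Z,
                  P.prob (fun ω => (Z ω, C ω) = (z, cc))
                    * P.prob (fun ω => (Z' ω, C ω) = (z', cc))
                    / P.prob (fun ω => C ω = cc)
                  = P.prob (fun ω => (Z' ω, C ω) = (z', cc)) := by
                intro z'
                rw [← Finset.sum_div, ← Finset.sum_mul, P.sum_pair_prob Z C cc,
                  mul_comm, mul_div_assoc, div_self hz.ne', mul_one]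
              simp_rw [hfac]
              rw [P.sum_pair_prob Z' C cc]
        _ = 1 := P.sum_prob_image C
    rw [step1, ← P.sum_image_prob_mul T g]
    refine le_trans (Finset.sum_le_sum fun t _ => step3 t) ?_
    refine le_trans (Finset.sum_le_sum_of_subset_of_nonneg ?_ fun t _ _ => step4 t) step5
    intro t ht
    simp only [Finset.mem_image] at ht
    obtain ⟨ω, -, rfl⟩ := ht
    exact Finset.mem_product.2 ⟨Finset.mem_image_of_mem _ (Finset.mem_univ ω),
      Finset.mem_product.2 ⟨Finset.mem_image_of_mem _ (Finset.mem_univ ω),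
        Finset.mem_image_of_mem _ (Finset.mem_univ ω)⟩⟩
  -- Jensen
  have hjen : ∑ ω, P.p ω * Real.logb 2 (r ω) ≤ 0 := by
    have hj := concaveOn_logb2.le_map_sum (t := Finset.univ) (w := P.p) (p := r)
      (fun i _ => P.nonneg i) P.sum_one (fun i _ => hrpos i)
    simp only [smul_eq_mul] at hj
    refine le_trans hj ?_
    refine Real.logb_nonpos (by norm_num) ?_ hsum_le
    exact Finset.sum_nonneg fun ω _ => mul_nonneg (P.nonneg ω) (hrpos ω).le
  -- rewrite goal
  rw [P.entH_eq (fun ω => (Z ω, Z' ω, C ω)), P.entH_eq C,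
    P.entH_eq (fun ω => (Z ω, C ω)), P.entH_eq (fun ω => (Z' ω, C ω))]
  rw [← Finset.sum_add_distrib, ← Finset.sum_add_distrib, ← sub_nonpos,
    ← Finset.sum_sub_distrib]
  refine le_trans (le_of_eq (Finset.sum_congr rfl fun ω _ => ?_)) hjen
  rcases (P.nonneg ω).eq_or_lt with hp | hp
  · rw [← hp]; ring
  · have h1 := lt_of_lt_of_le hp (hpa ω)
    have h2 := lt_of_lt_of_le hp (hpb ω)
    have h3 := lt_of_lt_of_le hp (hpd ω)
    have h4 := lt_of_lt_of_le hp (hpe ω)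
    have hrw : r ω = a ω * b ω / (d ω * e ω) := by
      simp only [hr]; rw [if_neg hp.ne']
    rw [hrw, Real.logb_div (by positivity) (by positivity),
      Real.logb_mul h1.ne' h2.ne', Real.logb_mul h3.ne' h4.ne']
    ring

lemma condH_pair_le {σ σ' τ : Type} (Z : Ω → σ) (Z' : Ω → σ') (C : Ω → τ) :
    P.condH (fun ω => (Z ω, Z' ω)) C ≤ P.condH Z C + P.condH Z' C := by
  have hsub := P.entH_submodular Z Z' C
  have hre : P.entH (fun ω => ((Z ω, Z' ω), C ω)) = P.entH (fun ω => (Z ω, Z' ω, C ω)) :=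
    P.entH_congr (fun ω ω' => by simp only [Prod.mk.injEq]; tauto)
  unfold condH
  rw [hre]
  linarith

end FinProb

end Submod

section TupleAndUniform

open Finset

namespace FinProb

variable {Ω : Type} [Fintype Ω] (P : FinProb Ω)

lemma condH_tuple_le {ι σ τ : Type} [Fintype ι] (Z : ι → Ω → σ) (C : Ω → τ) (s : Finset ι) :
    P.condH (fun ω (i : ι) => if i ∈ s then some (Z i ω) else none) C
      ≤ ∑ i ∈ s, P.condH (Z i) C := by
  classical
  induction s using Finset.induction_on with
  | empty =>
      simp only [Finset.notMem_empty, if_false, Finset.sum_empty]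
      unfold condH
      rw [P.entH_congr (Z := fun ω => ((fun _ : ι => (none : Option σ)), C ω)) (Z' := C)
        (fun ω ω' => by simp only [Prod.mk.injEq, true_and])]
      simp
  | @insert a s' hnotmem ih =>
      have hpart : P.condH (fun ω (i : ι) => if i ∈ insert a s' then some (Z i ω) else none) C
          = P.condH (fun ω => (Z a ω, fun i => if i ∈ s' then some (Z i ω) else none)) C := by
        refine P.condH_congr_left fun ω ω' => ?_
        constructor
        · rintro ⟨h1, h2⟩
          refine ⟨?_, h2⟩
          have hZa : Z a ω = Z a ω' := by
            have := congrFun h1 a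
            simpa [Finset.mem_insert_self] using this
          have hrest : (fun i => if i ∈ s' then some (Z i ω) else none)
              = (fun i => if i ∈ s' then some (Z i ω') else none) := by
            funext i
            by_cases hi : i ∈ s'
            · have := congrFun h1 i
              simpa [Finset.mem_insert_of_mem hi, hi] using this
            · simp [hi]
          simp only [Prod.mk.injEq]
          exact ⟨hZa, hrest⟩
        · rintro ⟨h1, h2⟩
          simp only [Prod.mk.injEq] at h1
          refine ⟨?_, h2⟩
          funext i
          by_cases hia : i = a
          · subst hia; simp [h1.1]
          · by_cases hi : i ∈ s'
            · have := congrFun h1.2 i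
              simpa [Finset.mem_insert, hia, hi] using this
            · simp [Finset.mem_insert, hia, hi]
      rw [hpart, Finset.sum_insert hnotmem]
      calc P.condH (fun ω => (Z a ω, fun i => if i ∈ s' then some (Z i ω) else none)) C
          ≤ P.condH (Z a) C
            + P.condH (fun ω (i : ι) => if i ∈ s' then some (Z i ω) else none) C :=
            P.condH_pair_le _ _ _
        _ ≤ P.condH (Z a) C + ∑ i ∈ s', P.condH (Z i) C := by linarith [ih]

end FinProb

/-- Number of sample points in an event. -/
def cntE {Ω : Type} [Fintype Ω] (E : Ω → Prop) : ℕ := (Finset.univ.filter E).card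

lemma cntE_congr {Ω : Type} [Fintype Ω] {E E' : Ω → Prop} (h : ∀ ω, E ω ↔ E' ω) :
    cntE E = cntE E' := by
  unfold cntE
  congr 1
  exact Finset.filter_congr fun ω _ => h ω

lemma cntE_pos {Ω : Type} [Fintype Ω] {E : Ω → Prop} (ω : Ω) (h : E ω) : 0 < cntE E :=
  Finset.card_pos.2 ⟨ω, Finset.mem_filter.2 ⟨Finset.mem_univ ω, h⟩⟩

lemma uniform_prob {Ω : Type} [Fintype Ω] [Nonempty Ω] (E : Ω → Prop) :
    (uniformProb Ω).prob E = (cntE E : ℝ) / Fintype.card Ω := by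
  unfold FinProb.prob uniformProb cntE
  rw [← Finset.sum_filter, Finset.sum_const, nsmul_eq_mul, div_eq_mul_inv]

lemma uniform_entH {Ω σ : Type} [Fintype Ω] [Nonempty Ω] (Z : Ω → σ) :
    (uniformProb Ω).entH Z
      = (∑ ω, (Real.logb 2 (Fintype.card Ω) - Real.logb 2 (cntE fun ω' => Z ω' = Z ω)))
        / Fintype.card Ω := by
  rw [FinProb.entH_eq, Finset.sum_div]
  refine Finset.sum_congr rfl fun ω _ => ?_
  rw [uniform_prob]
  have h1 : ((cntE fun ω' => Z ω' = Z ω : ℕ) : ℝ) ≠ 0 :=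
    Nat.cast_ne_zero.2 (cntE_pos (E := fun ω' => Z ω' = Z ω) ω rfl).ne'
  have h2 : (Fintype.card Ω : ℝ) ≠ 0 := Nat.cast_ne_zero.2 Fintype.card_ne_zero
  rw [Real.logb_div h1 h2]
  show (Fintype.card Ω : ℝ)⁻¹ * _ = _
  rw [div_eq_inv_mul]
  ring

lemma uniform_condH {Ω σ τ : Type} [Fintype Ω] [Nonempty Ω] (Z : Ω → σ) (C : Ω → τ) :
    (uniformProb Ω).condH Z C
      = (∑ ω, (Real.logb 2 (cntE fun ω' => C ω' = C ω)
          - Real.logb 2 (cntE fun ω' => (Z ω', C ω') = (Z ω, C ω))))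
        / Fintype.card Ω := by
  unfold FinProb.condH
  rw [uniform_entH, uniform_entH, div_sub_div_same, ← Finset.sum_sub_distrib]
  congr 1
  refine Finset.sum_congr rfl fun ω _ => ?_
  ring

lemma cntE_prod_right {α β : Type} [Fintype α] [Fintype β] (E : α → Prop) (b : β) :
    cntE (fun x : α × β => E x.1 ∧ x.2 = b) = cntE E := by
  unfold cntE
  refine Finset.card_nbij' (fun x => x.1) (fun a => (a, b)) ?_ ?_ ?_ ?_
  · intro x hx
    simp only [Finset.mem_coe, Finset.mem_filter, Finset.mem_univ, true_and] at hx ⊢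
    exact hx.1
  · intro x hx
    simp only [Finset.mem_coe, Finset.mem_filter, Finset.mem_univ, true_and] at hx ⊢
    exact ⟨hx, trivial⟩
  · intro x hx
    simp only [Finset.mem_coe, Finset.mem_filter, Finset.mem_univ, true_and] at hx
    exact Prod.ext rfl hx.2.symm
  · intro a _
    rfl

lemma cntE_prod_left {α β : Type} [Fintype α] [Fintype β] (E : α → Prop) :
    cntE (fun x : α × β => E x.1) = cntE E * Fintype.card β := by
  unfold cntE
  rw [← Finset.card_univ (α := β), ← Finset.card_product]
  refine Finset.card_nbij' (fun x => (x.1, x.2)) (fun y => (y.1, y.2)) ?_ ?_ ?_ ?_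
  · intro x hx
    simp only [Finset.mem_coe, Finset.mem_filter, Finset.mem_univ, true_and, Finset.mem_product] at hx ⊢
    exact ⟨hx, trivial⟩
  · intro y hy
    simp only [Finset.mem_coe, Finset.mem_filter, Finset.mem_univ, true_and, Finset.mem_product] at hy ⊢
    exact hy.1
  · intro x _; rfl
  · intro y _; rfl

lemma cntE_prod_snd {α β : Type} [Fintype α] [Fintype β] (E : β → Prop) :
    cntE (fun x : α × β => E x.2) = Fintype.card α * cntE E := by
  unfold cntE
  rw [← Finset.card_univ (α := α), ← Finset.card_product]
  refine Finset.card_nbij' (fun x => (x.1, x.2)) (fun y => (y.1, y.2)) ?_ ?_ ?_ ?_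
  · intro x hx
    simp only [Finset.mem_coe, Finset.mem_filter, Finset.mem_univ, true_and, Finset.mem_product] at hx ⊢
    exact hx
  · intro y hy
    simp only [Finset.mem_coe, Finset.mem_filter, Finset.mem_univ, true_and, Finset.mem_product] at hy ⊢
    exact hy
  · intro x _; rfl
  · intro y _; rfl

end TupleAndUniform

section QueryDecomp

open Finset

lemma uniform_condH_query {W F' QT σ τ : Type}
    [Fintype W] [Nonempty W] [Fintype F'] [Nonempty F'] [Fintype QT]
    (Zf : QT → W → σ) (κ : F' → QT) (D : W → τ) :
    (uniformProb (W × F')).condH (fun ω => Zf (κ ω.2) ω.1) (fun ω => (D ω.1, ω.2))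
      = ∑ q : QT, ((cntE fun f => κ f = q : ℕ) : ℝ) / (Fintype.card F')
          * ((uniformProb (W × F')).condH (fun ω => Zf q ω.1) (fun ω => D ω.1)) := by
  classical
  have hcW : ((Fintype.card W : ℕ) : ℝ) ≠ 0 := Nat.cast_ne_zero.2 Fintype.card_ne_zero
  have hcF : ((Fintype.card F' : ℕ) : ℝ) ≠ 0 := Nat.cast_ne_zero.2 Fintype.card_ne_zero
  set h : QT → ℝ := fun q => ∑ w : W,
    (Real.logb 2 (cntE fun w' => D w' = D w)
      - Real.logb 2 (cntE fun w' => Zf q w' = Zf q w ∧ D w' = D w)) with hh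
  have hL : (uniformProb (W × F')).condH (fun ω => Zf (κ ω.2) ω.1) (fun ω => (D ω.1, ω.2))
      = (∑ f : F', h (κ f)) / ((Fintype.card W : ℝ) * (Fintype.card F' : ℝ)) := by
    rw [uniform_condH, Fintype.card_prod]
    push_cast
    congr 1
    rw [Fintype.sum_prod_type, Finset.sum_comm]
    refine Finset.sum_congr rfl fun f _ => ?_
    rw [hh]
    refine Finset.sum_congr rfl fun w _ => ?_
    simp only []
    have e1 : (cntE fun ω' : W × F' => (D ω'.1, ω'.2) = (D w, f))
        = cntE fun w' : W => D w' = D w := by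
      rw [← cntE_prod_right (fun w' : W => D w' = D w) f]
      exact cntE_congr fun ω' => by simp [Prod.ext_iff]
    have e2 : (cntE fun ω' : W × F' =>
          (Zf (κ ω'.2) ω'.1, (D ω'.1, ω'.2)) = (Zf (κ f) w, (D w, f)))
        = cntE fun w' : W => Zf (κ f) w' = Zf (κ f) w ∧ D w' = D w := by
      rw [← cntE_prod_right (fun w' : W => Zf (κ f) w' = Zf (κ f) w ∧ D w' = D w) f]
      refine cntE_congr fun ω' => ?_
      simp only [Prod.mk.injEq]
      constructor
      · rintro ⟨h1, h2, h3⟩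
        rw [h3] at h1
        exact ⟨⟨h1, h2⟩, h3⟩
      · rintro ⟨⟨h1, h2⟩, h3⟩
        rw [h3]
        exact ⟨h1, h2, rfl⟩
    rw [e1, e2]
  have hR : ∀ q : QT, (uniformProb (W × F')).condH (fun ω => Zf q ω.1) (fun ω => D ω.1)
      = h q / (Fintype.card W : ℝ) := by
    intro q
    rw [uniform_condH, Fintype.card_prod]
    push_cast
    rw [Fintype.sum_prod_type]
    have hbody : ∀ w : W, ∀ f : F',
        (Real.logb 2 (cntE fun ω' : W × F' => D ω'.1 = D w)
          - Real.logb 2 (cntE fun ω' : W × F' => (Zf q ω'.1, D ω'.1) = (Zf q w, D w)))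
        = (Real.logb 2 (cntE fun w' : W => D w' = D w)
          - Real.logb 2 (cntE fun w' : W => Zf q w' = Zf q w ∧ D w' = D w)) := by
      intro w f
      have e1 : (cntE fun ω' : W × F' => D ω'.1 = D w)
          = cntE (fun w' : W => D w' = D w) * Fintype.card F' :=
        cntE_prod_left (β := F') (fun w' : W => D w' = D w)
      have e2 : (cntE fun ω' : W × F' => (Zf q ω'.1, D ω'.1) = (Zf q w, D w))
          = cntE (fun w' : W => Zf q w' = Zf q w ∧ D w' = D w) * Fintype.card F' := by
        rw [← cntE_prod_left (fun w' : W => Zf q w' = Zf q w ∧ D w' = D w) (β := F')]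
        exact cntE_congr fun ω' => by simp [Prod.ext_iff]
      have hn1 : ((cntE fun w' : W => D w' = D w : ℕ) : ℝ) ≠ 0 :=
        Nat.cast_ne_zero.2 (cntE_pos (E := fun w' : W => D w' = D w) w rfl).ne'
      have hn2 : ((cntE fun w' : W => Zf q w' = Zf q w ∧ D w' = D w : ℕ) : ℝ) ≠ 0 :=
        Nat.cast_ne_zero.2
          (cntE_pos (E := fun w' : W => Zf q w' = Zf q w ∧ D w' = D w) w ⟨rfl, rfl⟩).ne'
      rw [e1, e2]
      push_cast
      rw [Real.logb_mul hn1 hcF, Real.logb_mul hn2 hcF]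
      ring
    calc (∑ w : W, ∑ f : F',
          (Real.logb 2 (cntE fun ω' : W × F' => D ω'.1 = D w)
            - Real.logb 2 (cntE fun ω' : W × F' => (Zf q ω'.1, D ω'.1) = (Zf q w, D w))))
          / ((Fintype.card W : ℝ) * (Fintype.card F' : ℝ))
        = (∑ w : W, (Fintype.card F' : ℝ) *
            (Real.logb 2 (cntE fun w' : W => D w' = D w)
              - Real.logb 2 (cntE fun w' : W => Zf q w' = Zf q w ∧ D w' = D w)))
          / ((Fintype.card W : ℝ) * (Fintype.card F' : ℝ)) := by
          congr 1
          refine Finset.sum_congr rfl fun w _ => ?_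
          rw [Finset.sum_congr rfl (fun f _ => hbody w f), Finset.sum_const,
            Finset.card_univ, nsmul_eq_mul]
      _ = h q / (Fintype.card W : ℝ) := by
          rw [hh, ← Finset.mul_sum]
          field_simp
  rw [hL]
  have hgroup : (∑ f : F', h (κ f))
      = ∑ q : QT, ((cntE fun f => κ f = q : ℕ) : ℝ) * h q := by
    rw [Finset.sum_comp h κ]
    calc ∑ q ∈ Finset.univ.image κ, (Finset.univ.filter fun f => κ f = q).card • h q
        = ∑ q ∈ Finset.univ.image κ, ((cntE fun f => κ f = q : ℕ) : ℝ) * h q := by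
          refine Finset.sum_congr rfl fun q _ => ?_
          rw [nsmul_eq_mul]
          rfl
      _ = ∑ q : QT, ((cntE fun f => κ f = q : ℕ) : ℝ) * h q := by
          refine Finset.sum_subset (Finset.subset_univ _) fun q _ hq => ?_
          have h0 : (cntE fun f => κ f = q) = 0 :=
            Finset.card_eq_zero.2 (Finset.filter_eq_empty_iff.2
              (fun f _ hf => hq (hf ▸ Finset.mem_image_of_mem κ (Finset.mem_univ f))))
          rw [h0]
          simp
  rw [hgroup, Finset.sum_div]
  refine Finset.sum_congr rfl fun q _ => ?_
  rw [hR q]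
  ring

end QueryDecomp
section Cylinder

open Finset

lemma cnt_cyl {K' : ℕ} {V : Type} [Fintype V] (p : Fin K' → Prop) (w : Fin K' → V) :
    cntE (fun w' : Fin K' → V => ∀ i, p i → w' i = w i)
      = Fintype.card V ^ (Fintype.card {i : Fin K' // ¬ p i}) := by
  classical
  unfold cntE
  refine (Finset.card_eq_of_equiv_fintype ?_).trans Fintype.card_fun
  exact
    { toFun := fun w' i => w'.1 i.1
      invFun := fun g => ⟨fun i => if h : p i then w i else g ⟨i, h⟩, by
        simp only [Finset.mem_filter, Finset.mem_univ, true_and]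
        intro i hi
        rw [dif_pos hi]⟩
      left_inv := by
        rintro ⟨w', hw'⟩
        simp only [Finset.mem_filter, Finset.mem_univ, true_and] at hw'
        refine Subtype.ext ?_
        funext i
        by_cases h : p i
        · simp only [dif_pos h]
          exact (hw' i h).symm
        · simp only [dif_neg h]
      right_inv := fun g => by
        funext i
        simp only [dif_neg i.2] }

lemma card_subtype_not_lt {K' m : ℕ} (hm : m ≤ K')
    {inst : Fintype {i : Fin K' // ¬ (i : ℕ) < m}} :
    @Fintype.card {i : Fin K' // ¬ (i : ℕ) < m} inst = K' - m := by
  classical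
  rw [Fintype.card_congr (Equiv.refl {i : Fin K' // ¬ (i : ℕ) < m}),
    Fintype.card_subtype_compl]
  have hcard : Fintype.card {i : Fin K' // (i : ℕ) < m} = m := by
    have e : {i : Fin K' // (i : ℕ) < m} ≃ Fin m :=
      { toFun := fun i => ⟨i.1.1, i.2⟩
        invFun := fun j => ⟨⟨j.1, lt_of_lt_of_le j.2 hm⟩, j.2⟩
        left_inv := fun i => rfl
        right_inv := fun j => rfl }
    rw [Fintype.card_congr e, Fintype.card_fin]
  rw [hcard, Fintype.card_fin]

end Cylinder
/-- **Lemma 1.** The recursion T^k ≥ (L log₂|X|)/N + T^{k+1}/N, for every message index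
k ∈ {1,…,K-1} (here 0-indexed: k : Fin K with k+1 < K). -/
theorem T_recursion
{N K L : ℕ} {X Y F : Type} {Q S : Fin N → Type}
    [Fintype X] [Nonempty X] [Fintype Y] [Fintype F] [Nonempty F]
    [∀ n, Fintype (Q n)] [∀ n, Fintype (S n)]
    (c : PIRCode N K L X Y F Q S) (k : Fin K) (hk : (k : ℕ) + 1 < K) :
    c.T k ≥ (L * Real.logb 2 (Fintype.card X)) / N + c.T ⟨(k : ℕ) + 1, hk⟩ / N := by
  classical
  have hNpos : (0:ℝ) < (N : ℝ) := by exact_mod_cast c.hN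
  set P : FinProb (PIRSamp K L X F) := pirP K L X F with hPdef
  set m : ℕ := (k : ℕ) + 1 with hmdef
  set k₁ : Fin K := ⟨m, hk⟩ with hk₁def
  set Ccond : PIRSamp K L X F → ((Fin K → Option (Fin L → X)) × F) :=
    fun ω => (c.WleRv m ω, ω.2) with hCdef
  -- basic facts
  have hΩ : ((Fintype.card (PIRSamp K L X F) : ℕ) : ℝ) ≠ 0 :=
    Nat.cast_ne_zero.2 Fintype.card_ne_zero
  have hWcard : ((Fintype.card (Fin K → Fin L → X) : ℕ) : ℝ) ≠ 0 :=
    Nat.cast_ne_zero.2 Fintype.card_ne_zero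
  -- WleRv equality characterization
  have hWle : ∀ (mm : ℕ) (ω ω' : PIRSamp K L X F),
      c.WleRv mm ω = c.WleRv mm ω' ↔ ∀ i : Fin K, (i : ℕ) < mm → ω.1 i = ω'.1 i := by
    intro mm ω ω'
    constructor
    · intro h i hi
      have := congrFun h i
      simp only [PIRCode.WleRv, hi, if_true] at this
      exact Option.some_injective _ this
    · intro h
      funext i
      simp only [PIRCode.WleRv]
      by_cases hi : (i : ℕ) < mm
      · simp [hi, h i hi]
      · simp [hi]
  -- Step 1 : each single answer entropy is at most T k
  have h1 : ∀ n : Fin N, P.condH (c.Arv n k) Ccond ≤ c.T k := by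
    intro n
    exact P.condH_mono_left (Z := c.AallRv k) (Z' := c.Arv n k) Ccond
      (fun ω ω' hh => congrFun hh n)
  -- Step 2 : privacy
  have hA : ∀ (n : Fin N) (j : Fin K), P.condH (c.Arv n j) Ccond
      = ∑ q : Q n, ((cntE fun f => c.query n j f = q : ℕ) : ℝ) / (Fintype.card F)
          * (P.condH
              (fun ω : PIRSamp K L X F => List.ofFn (c.answer n q (c.store n ω.1)))
              (fun ω : PIRSamp K L X F =>
                (fun i : Fin K => if (i : ℕ) < m then some (ω.1 i) else none))) := by
    intro n j
    exact uniform_condH_query (W := Fin K → Fin L → X) (F' := F) (QT := Q n)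
      (fun q w => List.ofFn (c.answer n q (c.store n w))) (c.query n j)
      (fun w => (fun i : Fin K => if (i : ℕ) < m then some (w i) else none))
  have hcntq : ∀ (n : Fin N) (q : Q n),
      ((cntE fun f => c.query n k f = q : ℕ) : ℝ)
        = ((cntE fun f => c.query n k₁ f = q : ℕ) : ℝ) := by
    intro n q
    have hpriv := c.privacy n k k₁ q
    have hc : ∀ j : Fin K, (pirP K L X F).prob (fun ω => c.query n j ω.2 = q)
        = ((Fintype.card (Fin K → Fin L → X) : ℕ) : ℝ)
            * ((cntE fun f => c.query n j f = q : ℕ) : ℝ)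
          / (Fintype.card (PIRSamp K L X F)) := by
      intro j
      rw [show pirP K L X F = uniformProb (PIRSamp K L X F) from rfl, uniform_prob]
      rw [cntE_prod_snd (α := Fin K → Fin L → X) (fun f => c.query n j f = q)]
      push_cast
      ring
    rw [hc k, hc k₁] at hpriv
    have h' := (div_eq_div_iff hΩ hΩ).1 hpriv
    have h'' := mul_right_cancel₀ hΩ h'
    exact mul_left_cancel₀ hWcard h''
  have h2 : ∀ n : Fin N, P.condH (c.Arv n k) Ccond = P.condH (c.Arv n k₁) Ccond := by
    intro n
    rw [hA n k, hA n k₁]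
    refine Finset.sum_congr rfl fun q _ => ?_
    rw [hcntq n q]
  -- Step 3 : subadditivity
  have h3 : P.condH (c.AallRv k₁) Ccond ≤ ∑ n : Fin N, P.condH (c.Arv n k₁) Ccond := by
    have htuple := P.condH_tuple_le (fun i ω => c.Arv i k₁ ω) Ccond Finset.univ
    refine le_trans (le_of_eq ?_) htuple
    refine P.condH_congr_left fun ω ω' => ?_
    simp only [Finset.mem_univ, ite_true]
    constructor
    · rintro ⟨hh1, hh2⟩
      exact ⟨funext fun i => congrArg some (congrFun hh1 i), hh2⟩
    · rintro ⟨hh1, hh2⟩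
      exact ⟨funext fun i => Option.some_injective _ (congrFun hh1 i), hh2⟩
  -- Step 4 : correctness
  have h4 : P.condH (c.AallRv k₁) Ccond
      = P.condH (fun ω => (c.AallRv k₁ ω, ω.1 k₁)) Ccond := by
    refine P.condH_congr_left fun ω ω' => ?_
    constructor
    · rintro ⟨hh1, hh2⟩
      refine ⟨?_, hh2⟩
      have hf : ω.2 = ω'.2 := congrArg (fun x => x.2) hh2
      have hw : ω.1 k₁ = ω'.1 k₁ := c.correct k₁ ω ω' hf (fun n => congrFun hh1 n)
      simp only [Prod.mk.injEq]
      exact ⟨hh1, hw⟩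
    · rintro ⟨hh1, hh2⟩
      simp only [Prod.mk.injEq] at hh1
      exact ⟨hh1.1, hh2⟩
  -- Step 5 : chain rule
  have h5 := P.condH_chain (c.AallRv k₁) (fun ω => ω.1 k₁) Ccond
  -- Step 6 : condition recoding
  have hCsplit : ∀ ω ω' : PIRSamp K L X F,
      Ccond ω = Ccond ω' ↔ (c.WleRv m ω = c.WleRv m ω' ∧ ω.2 = ω'.2) := by
    intro ω ω'
    rw [hCdef]
    simp only [Prod.mk.injEq]
  have hk₁m : (k₁ : ℕ) < m + 1 := Nat.lt_succ_self m
  have h6 : P.condH (c.AallRv k₁) (fun ω => ((fun ω' : PIRSamp K L X F => ω'.1 k₁) ω, Ccond ω))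
      = c.T k₁ := by
    refine P.condH_congr_right (C' := fun ω : PIRSamp K L X F => (c.WleRv (m + 1) ω, ω.2))
      (fun ω ω' => ?_)
    simp only [Prod.mk.injEq]
    rw [hCsplit ω ω', hWle m ω ω', hWle (m + 1) ω ω']
    constructor
    · rintro ⟨hw, hle, hf⟩
      refine ⟨?_, hf⟩
      intro i hi
      rcases Nat.lt_or_ge (i : ℕ) m with hlt | hge
      · exact hle i hlt
      · have him : (i : ℕ) = m := by omega
        have hik : i = k₁ := Fin.ext him
        rw [hik]
        exact hw
    · rintro ⟨hall, hf⟩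
      exact ⟨hall k₁ hk₁m, fun i hi => hall i (by omega), hf⟩
  -- Step 7 : fresh message entropy
  have h7 : P.condH (fun ω : PIRSamp K L X F => ω.1 k₁) Ccond
      = (L : ℝ) * Real.logb 2 (Fintype.card X) := by
    rw [show P = uniformProb (PIRSamp K L X F) from rfl, uniform_condH]
    have hc1 : ∀ ω : PIRSamp K L X F,
        (cntE fun ω' : PIRSamp K L X F => Ccond ω' = Ccond ω)
          = Fintype.card (Fin L → X) ^ (K - m) := by
      intro ω
      have hiff : ∀ ω' : PIRSamp K L X F, (Ccond ω' = Ccond ω)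
          ↔ ((∀ i : Fin K, (i : ℕ) < m → ω'.1 i = ω.1 i) ∧ ω'.2 = ω.2) := by
        intro ω'
        rw [hCsplit ω' ω, hWle m ω' ω]
      rw [cntE_congr hiff,
        cntE_prod_right (fun w' : Fin K → Fin L → X =>
          ∀ i : Fin K, (i : ℕ) < m → w' i = ω.1 i) ω.2,
        cnt_cyl (fun i : Fin K => (i : ℕ) < m) ω.1,
        card_subtype_not_lt (le_of_lt hk)]
    have hc2 : ∀ ω : PIRSamp K L X F,
        (cntE fun ω' : PIRSamp K L X F =>
          ((fun ω'' : PIRSamp K L X F => ω''.1 k₁) ω', Ccond ω')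
            = ((fun ω'' : PIRSamp K L X F => ω''.1 k₁) ω, Ccond ω))
          = Fintype.card (Fin L → X) ^ (K - (m + 1)) := by
      intro ω
      have hiff : ∀ ω' : PIRSamp K L X F,
          (((fun ω'' : PIRSamp K L X F => ω''.1 k₁) ω', Ccond ω')
            = ((fun ω'' : PIRSamp K L X F => ω''.1 k₁) ω, Ccond ω))
          ↔ ((∀ i : Fin K, (i : ℕ) < m + 1 → ω'.1 i = ω.1 i) ∧ ω'.2 = ω.2) := by
        intro ω'
        simp only [Prod.mk.injEq]
        rw [hCsplit ω' ω, hWle m ω' ω]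
        constructor
        · rintro ⟨hw, hle, hf⟩
          refine ⟨?_, hf⟩
          intro i hi
          rcases Nat.lt_or_ge (i : ℕ) m with hlt | hge
          · exact hle i hlt
          · have him : (i : ℕ) = m := by omega
            have hik : i = k₁ := Fin.ext him
            rw [hik]
            exact hw
        · rintro ⟨hall, hf⟩
          exact ⟨hall k₁ hk₁m, fun i hi => hall i (by omega), hf⟩
      rw [cntE_congr hiff,
        cntE_prod_right (fun w' : Fin K → Fin L → X =>
          ∀ i : Fin K, (i : ℕ) < m + 1 → w' i = ω.1 i) ω.2,
        cnt_cyl (fun i : Fin K => (i : ℕ) < m + 1) ω.1,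
        card_subtype_not_lt hk]
    have hVX : Fintype.card (Fin L → X) = Fintype.card X ^ L := by
      rw [Fintype.card_fun, Fintype.card_fin]
    have hKm : K - m = (K - (m + 1)) + 1 := by omega
    have hterm : ∀ ω : PIRSamp K L X F,
        Real.logb 2 ((cntE fun ω' : PIRSamp K L X F => Ccond ω' = Ccond ω : ℕ) : ℝ)
          - Real.logb 2 ((cntE fun ω' : PIRSamp K L X F =>
              ((fun ω'' : PIRSamp K L X F => ω''.1 k₁) ω', Ccond ω')
                = ((fun ω'' : PIRSamp K L X F => ω''.1 k₁) ω, Ccond ω) : ℕ) : ℝ)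
        = (L : ℝ) * Real.logb 2 (Fintype.card X) := by
      intro ω
      rw [hc1 ω, hc2 ω, hVX, hKm]
      push_cast
      rw [← pow_mul, ← pow_mul]
      rw [Real.logb_pow, Real.logb_pow]
      push_cast
      ring
    rw [Finset.sum_congr rfl fun ω _ => hterm ω]
    rw [Finset.sum_const, Finset.card_univ, nsmul_eq_mul]
    exact mul_div_cancel_left₀ _ hΩ
  -- Assemble
  have s1 : ∑ n : Fin N, P.condH (c.Arv n k₁) Ccond ≤ (N : ℝ) * c.T k := by
    calc ∑ n : Fin N, P.condH (c.Arv n k₁) Ccond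
        = ∑ n : Fin N, P.condH (c.Arv n k) Ccond :=
          Finset.sum_congr rfl fun n _ => (h2 n).symm
      _ ≤ ∑ _n : Fin N, c.T k := Finset.sum_le_sum fun n _ => h1 n
      _ = (N : ℝ) * c.T k := by
          rw [Finset.sum_const, Finset.card_univ, Fintype.card_fin, nsmul_eq_mul]
  have key : (L : ℝ) * Real.logb 2 (Fintype.card X) + c.T k₁ ≤ (N : ℝ) * c.T k := by
    have heq : P.condH (c.AallRv k₁) Ccond
        = (L : ℝ) * Real.logb 2 (Fintype.card X) + c.T k₁ := by
      rw [h4, h5, h6, h7]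
    linarith [h3, s1, heq.symm.le, heq.le]
  rw [ge_iff_le, ← add_div, div_le_iff₀ hNpos]
  linarith [key]
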